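/- arXiv:1404.5173 — 4 statements merged into one kernel-verified Lean document; each statement's English description precedes it below -/
import Mathlib

section
/- For the thick cap C = CAP_{r1,r2}(u,θ) and y with ‖y‖ = r_Y satisfying √(r1² + nD) ≤ r_Y ≤ √(r2² + nD): if x ∈ C and (1/n)‖x−y‖² ≤ D, then the angle between y and u is at most θ + arcsin(√(nD)/r_Y). -/
/-!
By the triangle inequality for angles, `∠(y, u) ≤ ∠(y, x) + ∠(x, u)`. The point `x` lies in the
ball of radius `√(nD)` about `y`, and `√(nD) ≤ r_Y = ‖y‖`; such a ball is seen from the origin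
under a half-angle of `arcsin (√(nD) / ‖y‖)`, which bounds `∠(y, x)`.
-/

open Real RealInnerProductSpace

namespace InnerProductGeometry

variable {V : Type*} [NormedAddCommGroup V] [InnerProductSpace ℝ V]

/-- `‖y‖ sin ∠(x, y)` is the distance from `y` to the line `ℝ x`, hence at most `‖x - y‖`. -/
theorem norm_mul_sin_angle_le_norm_sub (x y : V) : ‖y‖ * sin (angle x y) ≤ ‖x - y‖ := by
  rcases eq_or_ne x 0 with rfl | hx
  · simp
  have hx' : 0 < ‖x‖ := norm_pos_iff.2 hx
  refine le_of_mul_le_mul_right ?_ hx'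
  have hsin := sin_angle_mul_norm_mul_norm x y
  rw [real_inner_self_eq_norm_sq, real_inner_self_eq_norm_sq] at hsin
  -- `(‖x - y‖ ‖x‖)² - (‖x‖²‖y‖² - ⟪x, y⟫²) = (‖x‖² - ⟪x, y⟫)²`
  have hgap : ‖x‖ ^ 2 * ‖y‖ ^ 2 - ⟪x, y⟫ * ⟪x, y⟫ ≤ (‖x - y‖ * ‖x‖) ^ 2 := by
    nlinarith [norm_sub_sq_real x y, sq_nonneg (‖x‖ ^ 2 - ⟪x, y⟫)]
  calc ‖y‖ * sin (angle x y) * ‖x‖ = √(‖x‖ ^ 2 * ‖y‖ ^ 2 - ⟪x, y⟫ * ⟪x, y⟫) := by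
        rw [← hsin]; ring
    _ ≤ √((‖x - y‖ * ‖x‖) ^ 2) := sqrt_le_sqrt hgap
    _ = ‖x - y‖ * ‖x‖ := sqrt_sq (by positivity)

theorem angle_le_pi_div_two_of_norm_sub_le {x y : V} (h : ‖x - y‖ ≤ ‖y‖) :
    angle x y ≤ π / 2 := by
  have hinner : 0 ≤ ⟪x, y⟫ := by
    nlinarith [norm_sub_sq_real x y, sq_nonneg ‖x‖, norm_nonneg (x - y)]
  exact arccos_le_pi_div_two.2 (by positivity)

theorem angle_le_arcsin_of_norm_sub_le {x y : V} {d : ℝ} (hy : y ≠ 0)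
    (h : ‖x - y‖ ≤ d) (hd : d ≤ ‖y‖) : angle x y ≤ arcsin (d / ‖y‖) := by
  have hy' : 0 < ‖y‖ := norm_pos_iff.2 hy
  have hsin : sin (angle x y) ≤ d / ‖y‖ := by
    rw [le_div_iff₀ hy', mul_comm]
    exact (norm_mul_sin_angle_le_norm_sub x y).trans h
  calc angle x y = arcsin (sin (angle x y)) :=
        (arcsin_sin (by linarith [angle_nonneg x y, pi_pos])
          (angle_le_pi_div_two_of_norm_sub_le (h.trans hd))).symm
    _ ≤ arcsin (d / ‖y‖) := monotone_arcsin hsin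

theorem angle_le_angle_add_arcsin_of_norm_sub_le {x y : V} {d : ℝ} (u : V)
    (h : ‖x - y‖ ≤ d) (hd : d ≤ ‖y‖) : angle y u ≤ angle x u + arcsin (d / ‖y‖) := by
  rcases eq_or_ne y 0 with rfl | hy
  · obtain rfl : x = 0 := by simpa using h.trans hd
    simp
  calc angle y u ≤ angle y x + angle x u := angle_le_angle_add_angle y x u
    _ ≤ arcsin (d / ‖y‖) + angle x u := by
        gcongr; rw [angle_comm]; exact angle_le_arcsin_of_norm_sub_le hy h hd
    _ = angle x u + arcsin (d / ‖y‖) := add_comm _ _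

end InnerProductGeometry

open InnerProductGeometry in
theorem thick_cap_expansion_angle_middle_general (n : ℕ) (hn : 0 < n)
    (u : EuclideanSpace ℝ (Fin n))
    (θ r1 D rY : ℝ)
    (hlo : Real.sqrt (r1 ^ 2 + (n : ℝ) * D) ≤ rY)
    (x y : EuclideanSpace ℝ (Fin n)) (hy : ‖y‖ = rY)
    (hang : InnerProductGeometry.angle x u ≤ θ)
    (hd : (1 / (n : ℝ)) * ‖x - y‖ ^ 2 ≤ D) :
    InnerProductGeometry.angle y u ≤ θ + Real.arcsin (Real.sqrt ((n : ℝ) * D) / rY) := by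
  have hn' : (0 : ℝ) < n := Nat.cast_pos.2 hn
  have hdist : ‖x - y‖ ≤ √(n * D) := by
    refine le_sqrt_of_sq_le ?_
    rwa [one_div, inv_mul_le_iff₀ hn'] at hd
  have hrY : √(n * D) ≤ rY :=
    (sqrt_le_sqrt (le_add_of_nonneg_left (sq_nonneg r1))).trans hlo
  subst hy
  calc angle y u ≤ angle x u + arcsin (√(n * D) / ‖y‖) :=
        angle_le_angle_add_arcsin_of_norm_sub_le u hdist hrY
    _ ≤ θ + arcsin (√(n * D) / ‖y‖) := by gcongr

/-- For the thick cap `CAP_{r1,r2}(u,θ)` and `y` with `‖y‖ = r_Y` satisfying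
`√(r1² + nD) ≤ r_Y ≤ √(r2² + nD)`: if `x` is in the thick cap and `(1/n)‖x−y‖² ≤ D`,
then the angle between `y` and `u` is at most `θ + arcsin(√(nD)/r_Y)`. -/
theorem thick_cap_expansion_angle_middle (n : ℕ) (hn : 0 < n)
    (u : EuclideanSpace ℝ (Fin n)) (hu : u ≠ 0)
    (θ r1 r2 D rY : ℝ) (hθ : θ ∈ Set.Icc 0 (π / 2))
    (hr1 : 0 < r1) (hr12 : r1 ≤ r2) (hD : 0 < D)
    (hlo : Real.sqrt (r1 ^ 2 + (n : ℝ) * D) ≤ rY)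
    (hhi : rY ≤ Real.sqrt (r2 ^ 2 + (n : ℝ) * D))
    (x y : EuclideanSpace ℝ (Fin n)) (hy : ‖y‖ = rY)
    (hx1 : r1 ≤ ‖x‖) (hx2 : ‖x‖ ≤ r2) (hang : InnerProductGeometry.angle x u ≤ θ)
    (hd : (1 / (n : ℝ)) * ‖x - y‖ ^ 2 ≤ D) :
    InnerProductGeometry.angle y u ≤ θ + Real.arcsin (Real.sqrt ((n : ℝ) * D) / rY) :=
  thick_cap_expansion_angle_middle_general n hn u θ r1 D rY hlo x y hy hang hd
end

section
/- For a thick cap C = CAP_{r1,r2}(u,θ) and y with ‖y‖ = r_Y ≤ √(r1² + nD): if there exists x ∈ C with (1/n)‖x−y‖² ≤ D, then angle(y,u) ≤ θ + arccos((r1² + r_Y² − nD)/(2 r1 r_Y)), provided the arccos argument lies in [−1,1]. -/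
/-!
By the law of cosines, `‖x - y‖² ≤ s := nD` gives `cos ∠(y, x) ≥ (‖x‖² + ‖y‖² - s) / (2 ‖x‖ ‖y‖)`,
and this lower bound only decreases when `‖x‖` is replaced by `r1 ≤ ‖x‖` (as `‖y‖² ≤ r1² + s`):
so `∠(y, x)` is at most the angle opposite the side `√s` in a triangle with sides `r1`, `‖y‖`,
`√s`. The triangle inequality for angles, `∠(y, u) ≤ ∠(y, x) + ∠(x, u)`, then adds `θ`.
-/

open Real RealInnerProductSpace

lemma sq_add_div_le_sq_add_div {r t a : ℝ} (hr : 0 < r) (hrt : r ≤ t) (ha : a ≤ r * t) :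
    (r ^ 2 + a) / r ≤ (t ^ 2 + a) / t := by
  rw [div_le_div_iff₀ hr (hr.trans_le hrt)]
  nlinarith [mul_nonneg (sub_nonneg.mpr hrt) (sub_nonneg.mpr ha)]

namespace InnerProductGeometry

variable {V : Type*} [NormedAddCommGroup V] [InnerProductSpace ℝ V]

theorem angle_le_arccos_of_norm_sub_sq_le {x y : V} {r s : ℝ} (hr : 0 < r) (hrx : r ≤ ‖x‖)
    (hys : ‖y‖ ^ 2 ≤ r ^ 2 + s) (hxy : ‖x - y‖ ^ 2 ≤ s) :
    angle y x ≤ arccos ((r ^ 2 + ‖y‖ ^ 2 - s) / (2 * r * ‖y‖)) := by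
  rcases eq_or_ne y 0 with rfl | hy
  · simp
  have hy0 : 0 < ‖y‖ := norm_pos_iff.mpr hy
  have hx0 : 0 < ‖x‖ := hr.trans_le hrx
  have hinner : (‖x‖ ^ 2 + ‖y‖ ^ 2 - s) / 2 ≤ ⟪y, x⟫ := by
    rw [real_inner_comm]
    linarith [norm_sub_sq_real x y]
  have hmono : (r ^ 2 + (‖y‖ ^ 2 - s)) / r ≤ (‖x‖ ^ 2 + (‖y‖ ^ 2 - s)) / ‖x‖ :=
    sq_add_div_le_sq_add_div hr hrx (by nlinarith)
  apply arccos_le_arccos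
  calc (r ^ 2 + ‖y‖ ^ 2 - s) / (2 * r * ‖y‖)
      = (r ^ 2 + (‖y‖ ^ 2 - s)) / r / (2 * ‖y‖) := by field_simp; ring
    _ ≤ (‖x‖ ^ 2 + (‖y‖ ^ 2 - s)) / ‖x‖ / (2 * ‖y‖) := by gcongr
    _ = (‖x‖ ^ 2 + ‖y‖ ^ 2 - s) / 2 / (‖y‖ * ‖x‖) := by field_simp; ring
    _ ≤ ⟪y, x⟫ / (‖y‖ * ‖x‖) := by gcongr

end InnerProductGeometry

open InnerProductGeometry in
theorem thick_cap_expansion_angle_low_general (n : ℕ) (hn : 0 < n)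
    (u : EuclideanSpace ℝ (Fin n))
    (θ r1 r2 D rY : ℝ)
    (hr1 : 0 < r1) (hD : 0 < D)
    (hhi : rY ≤ Real.sqrt (r1 ^ 2 + (n : ℝ) * D))
    (y : EuclideanSpace ℝ (Fin n)) (hy : ‖y‖ = rY)
    (hex : ∃ x : EuclideanSpace ℝ (Fin n),
      r1 ≤ ‖x‖ ∧ ‖x‖ ≤ r2 ∧ InnerProductGeometry.angle x u ≤ θ ∧
        (1 / (n : ℝ)) * ‖x - y‖ ^ 2 ≤ D) :
    InnerProductGeometry.angle y u ≤
      θ + Real.arccos ((r1 ^ 2 + rY ^ 2 - (n : ℝ) * D) / (2 * r1 * rY)) := by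
  obtain ⟨x, hxr1, -, hxu, hxy⟩ := hex
  subst hy
  have hdist : ‖x - y‖ ^ 2 ≤ n * D := by
    rwa [one_div_mul_eq_div, div_le_iff₀' (Nat.cast_pos.mpr hn)] at hxy
  have hys : ‖y‖ ^ 2 ≤ r1 ^ 2 + n * D :=
    (le_sqrt (norm_nonneg y) (by positivity)).mp hhi
  calc angle y u ≤ angle y x + angle x u := angle_le_angle_add_angle y x u
    _ ≤ _ := by linarith [angle_le_arccos_of_norm_sub_sq_le hr1 hxr1 hys hdist]

/-- For a thick cap `CAP_{r1,r2}(u,θ)` and `y` with `‖y‖ = r_Y ≤ √(r1² + nD)`: if there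
is `x` in the thick cap with `(1/n)‖x−y‖² ≤ D`, then
`angle(y,u) ≤ θ + arccos((r1² + r_Y² − nD)/(2 r1 r_Y))`, provided the arccos argument
lies in `[−1,1]`. -/
theorem thick_cap_expansion_angle_low (n : ℕ) (hn : 0 < n)
    (u : EuclideanSpace ℝ (Fin n)) (hu : u ≠ 0)
    (θ r1 r2 D rY : ℝ) (hθ : θ ∈ Set.Icc 0 (π / 2))
    (hr1 : 0 < r1) (hr12 : r1 ≤ r2) (hD : 0 < D)
    (hhi : rY ≤ Real.sqrt (r1 ^ 2 + (n : ℝ) * D))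
    (harg : |(r1 ^ 2 + rY ^ 2 - (n : ℝ) * D) / (2 * r1 * rY)| ≤ 1)
    (y : EuclideanSpace ℝ (Fin n)) (hy : ‖y‖ = rY)
    (hex : ∃ x : EuclideanSpace ℝ (Fin n),
      r1 ≤ ‖x‖ ∧ ‖x‖ ≤ r2 ∧ InnerProductGeometry.angle x u ≤ θ ∧
        (1 / (n : ℝ)) * ‖x - y‖ ^ 2 ≤ D) :
    InnerProductGeometry.angle y u ≤
      θ + Real.arccos ((r1 ^ 2 + rY ^ 2 - (n : ℝ) * D) / (2 * r1 * rY)) :=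
  thick_cap_expansion_angle_low_general n hn u θ r1 r2 D rY hr1 hD hhi y hy hex
end

section
/- Let p_1,...,p_M ≥ 0 sum to 1, let Ω* ∈ (0,1), c ∈ (0,1), let F : [0,1] → [0,1] be nondecreasing, and let p* ∈ (0,1) satisfy F(p*) = Ω*. If Σ_i p_i F(p_i) ≤ c·Ω*, then M ≥ (1−c)/p*. -/
/-! The indices with `p i ≥ p*` have `F (p i) ≥ Ω*`, so by a Markov-type bound they carry
total mass at most `c`. The remaining indices carry mass at least `1 - c` while each of them has
`p i < p*`, so there must be at least `(1 - c) / p*` of them. -/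

open Finset

namespace Finset

variable {ι : Type*} (s : Finset ι) {p g : ι → ℝ} {t C : ℝ}

theorem sum_filter_le_le_of_sum_mul_le (hp : ∀ i ∈ s, 0 ≤ p i) (hg : ∀ i ∈ s, 0 ≤ g i)
    (ht : 0 < t) (h : ∑ i ∈ s, p i * g i ≤ C * t) : ∑ i ∈ s with t ≤ g i, p i ≤ C := by
  refine le_of_mul_le_mul_right ?_ ht
  calc (∑ i ∈ s with t ≤ g i, p i) * t = ∑ i ∈ s with t ≤ g i, p i * t := sum_mul ..
    _ ≤ ∑ i ∈ s with t ≤ g i, p i * g i := sum_le_sum fun i hi =>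
        mul_le_mul_of_nonneg_left (mem_filter.1 hi).2 (hp i (mem_filter.1 hi).1)
    _ ≤ ∑ i ∈ s, p i * g i := sum_le_sum_of_subset_of_nonneg (filter_subset _ _)
        fun i hi _ => mul_nonneg (hp i hi) (hg i hi)
    _ ≤ C * t := h

theorem sub_le_sum_filter_lt_of_sum_mul_le (hsum : ∑ i ∈ s, p i = 1) (hp : ∀ i ∈ s, 0 ≤ p i)
    (hg : ∀ i ∈ s, 0 ≤ g i) (ht : 0 < t) (h : ∑ i ∈ s, p i * g i ≤ C * t) :
    1 - C ≤ ∑ i ∈ s with g i < t, p i := by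
  have hsplit := sum_filter_add_sum_filter_not s (fun i => t ≤ g i) p
  simp only [not_le] at hsplit
  linarith [sum_filter_le_le_of_sum_mul_le s hp hg ht h]

theorem sub_le_card_mul_of_sum_mul_le (hsum : ∑ i ∈ s, p i = 1) (hp : ∀ i ∈ s, 0 ≤ p i)
    (hg : ∀ i ∈ s, 0 ≤ g i) (ht : 0 < t) (h : ∑ i ∈ s, p i * g i ≤ C * t) {q : ℝ} (hq : 0 ≤ q)
    (hlight : ∀ i ∈ s, g i < t → p i ≤ q) : 1 - C ≤ #s * q :=
  calc 1 - C ≤ ∑ i ∈ s with g i < t, p i := sub_le_sum_filter_lt_of_sum_mul_le s hsum hp hg ht h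
    _ ≤ #{i ∈ s | g i < t} • q := sum_le_card_nsmul _ _ _ fun i hi =>
        hlight i (mem_filter.1 hi).1 (mem_filter.1 hi).2
    _ ≤ #s * q := by
        rw [nsmul_eq_mul]
        exact mul_le_mul_of_nonneg_right (by exact_mod_cast card_filter_le _ _) hq

end Finset

theorem converse_counting_lemma_general (M : ℕ) (p : Fin M → ℝ)
    (hp : ∀ i, 0 ≤ p i) (hsum : ∑ i, p i = 1)
    (Ωstar c pstar : ℝ) (hΩ : Ωstar ∈ Set.Ioo (0:ℝ) 1)
    (F : ℝ → ℝ) (hFmono : MonotoneOn F (Set.Icc 0 1))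
    (hFrange : ∀ x ∈ Set.Icc (0:ℝ) 1, F x ∈ Set.Icc (0:ℝ) 1)
    (hpstar : pstar ∈ Set.Ioo (0:ℝ) 1) (hFp : F pstar = Ωstar)
    (hle : ∑ i, p i * F (p i) ≤ c * Ωstar) :
    (M : ℝ) ≥ (1 - c) / pstar := by
  have hp_mem : ∀ i, p i ∈ Set.Icc (0:ℝ) 1 := fun i =>
    ⟨hp i, hsum ▸ single_le_sum (fun j _ => hp j) (mem_univ i)⟩
  have hlight : ∀ i ∈ univ, F (p i) < Ωstar → p i ≤ pstar := fun i _ hi =>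
    le_of_lt <| not_le.1 fun h => hi.not_ge <| hFp ▸ hFmono (Set.Ioo_subset_Icc_self hpstar) (hp_mem i) h
  have hcount := sub_le_card_mul_of_sum_mul_le univ hsum (fun i _ => hp i)
    (fun i _ => (hFrange _ (hp_mem i)).1) hΩ.1 hle hpstar.1.le hlight
  rw [card_univ, Fintype.card_fin] at hcount
  exact (div_le_iff₀ hpstar.1).2 hcount

/-- Abstract form of Lemma 4 of the converse: if `p_1,…,p_M ≥ 0` sum to 1,
`Ω* ∈ (0,1)`, `c ∈ (0,1)`, `F : [0,1] → [0,1]` is nondecreasing, `p* ∈ (0,1)` satisfies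
`F(p*) = Ω*`, and `Σ_i p_i F(p_i) ≤ c·Ω*`, then `M ≥ (1−c)/p*`. -/
theorem converse_counting_lemma (M : ℕ) (p : Fin M → ℝ)
    (hp : ∀ i, 0 ≤ p i) (hsum : ∑ i, p i = 1)
    (Ωstar c pstar : ℝ) (hΩ : Ωstar ∈ Set.Ioo (0:ℝ) 1) (hc : c ∈ Set.Ioo (0:ℝ) 1)
    (F : ℝ → ℝ) (hFmono : MonotoneOn F (Set.Icc 0 1))
    (hFrange : ∀ x ∈ Set.Icc (0:ℝ) 1, F x ∈ Set.Icc (0:ℝ) 1)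
    (hpstar : pstar ∈ Set.Ioo (0:ℝ) 1) (hFp : F pstar = Ωstar)
    (hle : ∑ i, p i * F (p i) ≤ c * Ωstar) :
    (M : ℝ) ≥ (1 - c) / pstar :=
  converse_counting_lemma_general M p hp hsum Ωstar c pstar hΩ F hFmono hFrange hpstar hFp hle
end

section
/- Let s ∈ R^n be a point on the unit sphere lying in annulus A_i, and let y = h_i(s) be its image under the annulus mapping. Then ‖y‖ = cos(α_i) − 2 sin(|arcsin(s_n) − α_i|/2), where s_n is the last coordinate of s. -/
/-!
Write a unit vector `s` with last coordinate `sin β` as its horizontal part `s'`, of norm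
`cos β`, plus that last coordinate. For `z` on the latitude `sin α`, Cauchy–Schwarz on the
horizontal parts gives `⟪s, z⟫ ≤ cos β cos α + sin β sin α = cos (β - α)`, with equality at the
point of that latitude lying over `s'`. Hence the nearest point `p` satisfies
`⟪s, p⟫ = cos (β - α)`, and `‖s - p‖² = 2 - 2 cos (β - α)` is the chord `(2 sin (|β - α| / 2))²`.
Since `s' / ‖s'‖` is a unit vector, `‖h_i(s)‖ = cos α_i - ‖p - s‖`.
-/

open Real
open scoped RealInnerProductSpace

theorem norm_sub_eq_two_mul_abs_sin_half {E : Type*} [NormedAddCommGroup E]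
    [InnerProductSpace ℝ E] {x z : E} (hx : ‖x‖ = 1) (hz : ‖z‖ = 1) {θ : ℝ}
    (hθ : ⟪x, z⟫ = cos θ) : ‖x - z‖ = 2 * |sin (θ / 2)| := by
  rw [← sq_eq_sq₀ (norm_nonneg _) (by positivity), norm_sub_sq_real, hx, hz, hθ, mul_pow, sq_abs,
    sin_sq_eq_half_sub, mul_div_cancel₀ θ two_ne_zero]
  ring

namespace EuclideanSpace

variable {m : ℕ}

def dropLast (x : EuclideanSpace ℝ (Fin (m + 1))) : EuclideanSpace ℝ (Fin m) :=
  WithLp.toLp 2 fun j => x j.castSucc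

theorem inner_eq_inner_dropLast_add (x z : EuclideanSpace ℝ (Fin (m + 1))) :
    ⟪x, z⟫ = ⟪dropLast x, dropLast z⟫ + x (Fin.last m) * z (Fin.last m) := by
  simp only [PiLp.inner_apply, Fin.sum_univ_castSucc, dropLast, RCLike.inner_apply, conj_trivial]
  ring

theorem norm_sq_eq_norm_dropLast_sq_add (x : EuclideanSpace ℝ (Fin (m + 1))) :
    ‖x‖ ^ 2 = ‖dropLast x‖ ^ 2 + x (Fin.last m) ^ 2 := by
  rw [← real_inner_self_eq_norm_sq, ← real_inner_self_eq_norm_sq, inner_eq_inner_dropLast_add, sq]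

def latitude (m : ℕ) (α : ℝ) : Set (EuclideanSpace ℝ (Fin (m + 1))) :=
  {z | ‖z‖ = 1 ∧ z (Fin.last m) = sin α}

theorem norm_dropLast_of_mem_latitude {x : EuclideanSpace ℝ (Fin (m + 1))} {β : ℝ}
    (hx : x ∈ latitude m β) (hβ : β ∈ Set.Icc (-(π / 2)) (π / 2)) : ‖dropLast x‖ = cos β := by
  rw [cos_eq_sqrt_one_sub_sin_sq hβ.1 hβ.2, ← hx.2, ← one_pow 2, ← hx.1,
    norm_sq_eq_norm_dropLast_sq_add, add_sub_cancel_right, sqrt_sq (norm_nonneg _)]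

theorem inner_le_cos_sub_of_mem_latitude {x z : EuclideanSpace ℝ (Fin (m + 1))} {α β : ℝ}
    (hx : x ∈ latitude m β) (hz : z ∈ latitude m α)
    (hβ : β ∈ Set.Icc (-(π / 2)) (π / 2)) (hα : α ∈ Set.Icc (-(π / 2)) (π / 2)) :
    ⟪x, z⟫ ≤ cos (β - α) :=
  calc ⟪x, z⟫ = ⟪dropLast x, dropLast z⟫ + sin β * sin α := by
        rw [inner_eq_inner_dropLast_add, hx.2, hz.2]
    _ ≤ ‖dropLast x‖ * ‖dropLast z‖ + sin β * sin α := by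
        gcongr; exact real_inner_le_norm _ _
    _ = cos (β - α) := by
        rw [norm_dropLast_of_mem_latitude hx hβ, norm_dropLast_of_mem_latitude hz hα, cos_sub]

theorem exists_mem_latitude_inner_eq_cos_sub {x : EuclideanSpace ℝ (Fin (m + 1))} {β : ℝ}
    (hx : x ∈ latitude m β) (hx₀ : dropLast x ≠ 0) (hβ : β ∈ Set.Icc (-(π / 2)) (π / 2))
    {α : ℝ} (hα : α ∈ Set.Icc (-(π / 2)) (π / 2)) :
    ∃ z ∈ latitude m α, ⟪x, z⟫ = cos (β - α) := by
  have hcos : cos β ≠ 0 := by rwa [← norm_dropLast_of_mem_latitude hx hβ, norm_ne_zero_iff]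
  set z : EuclideanSpace ℝ (Fin (m + 1)) :=
    WithLp.toLp 2 (Fin.snoc (α := fun _ => ℝ) (fun j => cos α / cos β * x j.castSucc) (sin α))
  have hz_drop : dropLast z = (cos α / cos β) • dropLast x := by
    ext j; simp [z, dropLast]
  have hz_last : z (Fin.last m) = sin α := by simp [z]
  have hinner : ⟪x, z⟫ = cos (β - α) := by
    rw [inner_eq_inner_dropLast_add, hz_drop, inner_smul_right, real_inner_self_eq_norm_sq,
      norm_dropLast_of_mem_latitude hx hβ, hx.2, hz_last, cos_sub]
    field_simp
  refine ⟨z, ⟨?_, hz_last⟩, hinner⟩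
  rw [← sq_eq_sq₀ (norm_nonneg _) zero_le_one, norm_sq_eq_norm_dropLast_sq_add, hz_drop,
    norm_smul, norm_dropLast_of_mem_latitude hx hβ, hz_last, Real.norm_eq_abs, abs_div,
    abs_of_nonneg (cos_nonneg_of_mem_Icc hα), abs_of_nonneg (cos_nonneg_of_mem_Icc hβ)]
  field_simp
  exact cos_sq_add_sin_sq α

theorem norm_sub_eq_of_isMinOn_latitude {x p : EuclideanSpace ℝ (Fin (m + 1))} {α β : ℝ}
    (hx : x ∈ latitude m β) (hx₀ : dropLast x ≠ 0) (hp : p ∈ latitude m α)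
    (hmin : IsMinOn (fun z => ‖x - z‖) (latitude m α) p)
    (hβ : β ∈ Set.Icc (-(π / 2)) (π / 2)) (hα : α ∈ Set.Icc (-(π / 2)) (π / 2)) :
    ‖x - p‖ = 2 * sin (|β - α| / 2) := by
  obtain ⟨z, hz, hxz⟩ := exists_mem_latitude_inner_eq_cos_sub hx hx₀ hβ hα
  have hdist_sq (w : EuclideanSpace ℝ (Fin (m + 1))) (hw : w ∈ latitude m α) :
      ‖x - w‖ ^ 2 = 2 - 2 * ⟪x, w⟫ := by
    rw [norm_sub_sq_real, hx.1, hw.1]; ring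
  have hinner : ⟪x, p⟫ = cos |β - α| := by
    refine cos_abs (β - α) ▸ le_antisymm (inner_le_cos_sub_of_mem_latitude hx hp hβ hα) ?_
    have hpz := pow_le_pow_left₀ (norm_nonneg _) (hmin hz) 2
    rw [hdist_sq p hp, hdist_sq z hz, hxz] at hpz
    linarith
  have hsin : 0 ≤ sin (|β - α| / 2) := by
    have : |β - α| ≤ π := abs_sub_le_iff.2 ⟨by linarith [hβ.2, hα.1], by linarith [hβ.1, hα.2]⟩
    exact sin_nonneg_of_nonneg_of_le_pi (by positivity) (by linarith [pi_pos])
  rw [norm_sub_eq_two_mul_abs_sin_half hx.1 hp.1 hinner, abs_of_nonneg hsin]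

end EuclideanSpace

/-- Norm of the annulus mapping: if `s` is a unit vector in annulus `A_i`
(with `α_i ≥ 0`), `p = P_i(s)` is the closest point to `s` on the unit sphere with last
coordinate `sin α_i`, the positive part in `h_i` is not active, and
`y = h_i(s) = (s'/‖s'‖)(cos α_i − ‖p − s‖)` (where `s'` drops the last coordinate), then
`‖y‖ = cos α_i − 2 sin(|arcsin s_n − α_i|/2)`. -/
theorem norm_of_annulus_mapping (n : ℕ) (hn : 1 < n) (αi : ℝ)
    (hαi : 0 ≤ αi)
    (s : EuclideanSpace ℝ (Fin n)) (hs : ‖s‖ = 1)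
    (sn : ℝ) (hsn : sn = s ⟨n - 1, by omega⟩)
    (hann1 : αi ≤ Real.arcsin sn)
    (p : EuclideanSpace ℝ (Fin n)) (hp : ‖p‖ = 1)
    (hpn : p ⟨n - 1, by omega⟩ = Real.sin αi)
    (hmin : ∀ z : EuclideanSpace ℝ (Fin n), ‖z‖ = 1 → z ⟨n - 1, by omega⟩ = Real.sin αi →
      ‖s - p‖ ≤ ‖s - z‖)
    (s' : EuclideanSpace ℝ (Fin (n - 1)))
    (hs' : s' = fun j : Fin (n - 1) => s (Fin.castLE (Nat.sub_le n 1) j))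
    (hs'ne : s' ≠ 0)
    (hpos : 0 ≤ Real.cos αi - ‖p - s‖)
    (y : EuclideanSpace ℝ (Fin (n - 1)))
    (hy : y = ((Real.cos αi - ‖p - s‖) / ‖s'‖) • s') :
    ‖y‖ = Real.cos αi - 2 * Real.sin (|Real.arcsin sn - αi| / 2) := by
  obtain ⟨m, rfl⟩ : ∃ m, n = m + 1 := ⟨n - 1, by omega⟩
  have hs'_eq : s' = EuclideanSpace.dropLast s := WithLp.ofLp_injective 2 hs'
  have hsn_le : |sn| ≤ 1 := hs ▸ hsn ▸ PiLp.norm_apply_le s _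
  have hs_lat : s ∈ EuclideanSpace.latitude m (arcsin sn) :=
    ⟨hs, by rw [sin_arcsin (abs_le.1 hsn_le).1 (abs_le.1 hsn_le).2, hsn]; rfl⟩
  have hβ := arcsin_mem_Icc sn
  have hα : αi ∈ Set.Icc (-(π / 2)) (π / 2) := ⟨by linarith [pi_pos], hann1.trans hβ.2⟩
  have hchord : ‖p - s‖ = 2 * sin (|arcsin sn - αi| / 2) := by
    rw [norm_sub_rev]
    exact EuclideanSpace.norm_sub_eq_of_isMinOn_latitude hs_lat (hs'_eq ▸ hs'ne) ⟨hp, hpn⟩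
      (fun z hz => hmin z hz.1 hz.2) hβ hα
  rw [hy, norm_smul, Real.norm_of_nonneg (div_nonneg hpos (norm_nonneg _)),
    div_mul_cancel₀ _ (norm_ne_zero_iff.2 hs'ne), hchord]
end
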